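/- Let (α, β) be a Bailey pair relative to a = q^ℓ with ℓ a non-negative integer; i.e. β_L = Σ_{r=0}^{L} α_r / ((q)_{L-r} (q^{ℓ+1};q)_{L+r}) for all L ≥ 0. Define sequences α̃, β̃ in F by: α̃_m = 0 for 0 ≤ m ≤ ℓ-1, α̃_{2L+ℓ} = α_L and α̃_{2L+ℓ+1} = 0 for L ≥ 0; and β̃_m = 0 for 0 ≤ m ≤ ℓ-1, β̃_{L+ℓ} = Σ_{s=0, s ≡ L (mod 2)}^{L} q^{s²/2} / ((q)_ℓ (q)_s) · β_{(L-s)/2} for L ≥ 0. Then (α̃, β̃) forms a trinomial Bailey pair relative to 0, i.e. β̃_L = Σ_{r=0}^{L} Q_0(L, r, q) · α̃_r for every integer L ≥ 0. -/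

import Mathlib

open Finset

noncomputable section

/-- The field `F = RatFunc ℚ` of rational functions over `ℚ` in the variable `t`,
where `t` plays the role of `q^(1/2)`. -/
abbrev F : Type := RatFunc ℚ

/-- The variable `t = q^(1/2)`. -/
def t : F := RatFunc.X

/-- `q = t^2`. -/
def q : F := t ^ 2

/-- The Pochhammer symbol `(a; b)_n = ∏_{k=0}^{n-1} (1 - a bᵏ)`, set equal to `0` for
negative `n` (so that any term containing a factor `1/(a;b)_n` with `n < 0` vanishes). -/
def poch (b a : F) (n : ℤ) : F :=
  if n < 0 then 0 else ∏ k ∈ Finset.range n.toNat, (1 - a * b ^ k)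

/-- The `q`-trinomial coefficient `((L; B; qq))_{A,2}` with base `qq`:
`∑_j qq^(j(j+B)) (qq)_L / ((qq)_j (qq)_{j+A} (qq)_{L-2j-A})`; the sum is finite since
terms with a negative Pochhammer index in the denominator vanish. -/
def trinom (qq : F) (L : ℕ) (B A : ℤ) : F :=
  ∑ j ∈ Finset.range (L + 1),
    qq ^ ((j : ℤ) * ((j : ℤ) + B)) * poch qq qq (L : ℤ) /
      (poch qq qq (j : ℤ) * poch qq qq ((j : ℤ) + A) *
        poch qq qq ((L : ℤ) - 2 * (j : ℤ) - A))

/-- `T_n(L, A, q) = q^((L(L-n) - A(A-n))/2) ((L; A-n; q⁻¹))_{A,2}`; note `t ^ m = q ^ (m/2)`. -/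
def T (n : ℤ) (L : ℕ) (A : ℤ) : F :=
  t ^ ((L : ℤ) * ((L : ℤ) - n) - A * (A - n)) * trinom q⁻¹ L (A - n) A

/-- `Q_n(L, A, q) = T_n(L, A, q) / (q)_L`. -/
def Q (n : ℤ) (L : ℕ) (A : ℤ) : F := T n L A / poch q q (L : ℤ)

/-! Expanding `β` in the definition of `β̃ (M + ℓ)` and using
`(q)_ℓ (q^(ℓ+1); q)_(i+k) = (q)_(i+k+ℓ)` writes `β̃ (M + ℓ)` as a double sum
`∑_i ∑_k K(i, k) α_k`. On the other side, inverting the base of the `q`-trinomial coefficient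
gives `Q_0(L, r) = ∑_j q^((L-2j-r)²/2) / ((q)_j (q)_(j+r) (q)_(L-2j-r))`; only `r = 2k + ℓ`
contributes against `α̃`, and the substitution `i = j + k` produces the same double sum. -/

lemma t_ne_zero : t ≠ 0 := RatFunc.X_ne_zero

lemma one_sub_t_pow_ne_zero {m : ℕ} (hm : m ≠ 0) : 1 - t ^ m ≠ 0 := by
  rw [sub_ne_zero, ne_comm, t, ← RatFunc.algebraMap_X, ← map_pow,
    ← map_one (algebraMap (Polynomial ℚ) F), (RatFunc.algebraMap_injective ℚ).ne_iff]
  intro h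
  simpa [hm] using congrArg Polynomial.natDegree h

lemma poch_natCast (b a : F) (n : ℕ) : poch b a n = ∏ k ∈ range n, (1 - a * b ^ k) := by
  simp [poch]

lemma poch_of_neg (b a : F) {n : ℤ} (hn : n < 0) : poch b a n = 0 := if_pos hn

lemma poch_mul_poch_mul_pow (b a : F) (ℓ m : ℕ) :
    poch b a ℓ * poch b (a * b ^ ℓ) m = poch b a ((ℓ + m : ℕ) : ℤ) := by
  simp only [poch_natCast, prod_range_add, pow_add, mul_assoc]

lemma poch_q_ne_zero (n : ℕ) : poch q q n ≠ 0 := by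
  rw [poch_natCast, prod_ne_zero_iff]
  intro k _
  rw [q, ← pow_mul, ← pow_add]
  exact one_sub_t_pow_ne_zero (by omega)

lemma poch_inv_q_mul_t_pow (n : ℕ) :
    poch q⁻¹ q⁻¹ n * t ^ (n * (n + 1)) = (-1) ^ n * poch q q n := by
  induction n with
  | zero => simp [poch]
  | succ n ih =>
    have hq : q * q ^ n = t ^ (2 * n + 2) := by rw [q, ← pow_mul, ← pow_add]; ring_nf
    have hq_inv : q⁻¹ * q⁻¹ ^ n = (t ^ (2 * n + 2))⁻¹ := by rw [← hq, mul_inv, inv_pow]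
    have hx : (1 - (t ^ (2 * n + 2))⁻¹) * t ^ (2 * n + 2) = -(1 - t ^ (2 * n + 2)) := by
      have := pow_ne_zero (2 * n + 2) t_ne_zero
      field_simp
      ring
    simp only [poch_natCast] at ih ⊢
    rw [prod_range_succ, prod_range_succ, hq, hq_inv,
      show (n + 1) * (n + 1 + 1) = n * (n + 1) + (2 * n + 2) by ring, pow_add]
    linear_combination (t ^ (2 * n + 2) - 1) * ih +
      (∏ k ∈ range n, (1 - q⁻¹ * q⁻¹ ^ k)) * t ^ (n * (n + 1)) * hx

lemma poch_inv_q (n : ℕ) : poch q⁻¹ q⁻¹ n = (-1) ^ n * poch q q n / t ^ (n * (n + 1)) :=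
  eq_div_of_mul_eq (pow_ne_zero _ t_ne_zero) (poch_inv_q_mul_t_pow n)

lemma trinomial_inv_term_eq {j r c L : ℕ} (hL : 2 * j + r + c = L) :
    t ^ ((L : ℤ) * L - r * r) * (q⁻¹ ^ ((j : ℤ) * (j + r)) * poch q⁻¹ q⁻¹ L /
      (poch q⁻¹ q⁻¹ j * poch q⁻¹ q⁻¹ ((j : ℤ) + r) * poch q⁻¹ q⁻¹ c)) / poch q q L =
    t ^ ((c : ℤ) ^ 2) / (poch q q j * poch q q ((j : ℤ) + r) * poch q q c) := by
  subst hL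
  have h_exp : ((2 * j + r + c : ℕ) : ℤ) * (2 * j + r + c : ℕ) - r * r =
      ((4 * j * j + 4 * j * r + 4 * j * c + 2 * r * c + c * c : ℕ) : ℤ) := by push_cast; ring
  rw [h_exp, show (j : ℤ) * (j + r) = (j * (j + r) : ℕ) by push_cast; ring,
    show (j : ℤ) + r = (j + r : ℕ) by push_cast; ring,
    show (c : ℤ) ^ 2 = (c ^ 2 : ℕ) by push_cast; ring]
  simp only [zpow_natCast, poch_inv_q]
  have hPL := poch_q_ne_zero (2 * j + r + c)
  have hPj := poch_q_ne_zero j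
  have hPjr := poch_q_ne_zero (j + r)
  have hPc := poch_q_ne_zero c
  have ht := t_ne_zero
  simp only [q, inv_pow, ← pow_mul] at hPL hPj hPjr hPc ⊢
  -- the signs `(-1)^n` cancel because `L = j + (j + r) + c`
  field_simp
  ring

lemma Q_zero_eq_sum (L r : ℕ) : Q 0 L r = ∑ j ∈ range (L + 1),
    t ^ (((L : ℤ) - 2 * j - r) ^ 2) /
      (poch q q j * poch q q ((j : ℤ) + r) * poch q q ((L : ℤ) - 2 * j - r)) := by
  simp only [Q, T, trinom, sub_zero, mul_sum, sum_div]
  refine sum_congr rfl fun j _ => ?_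
  rcases lt_or_ge ((L : ℤ) - 2 * j - r) 0 with hneg | hnonneg
  · simp [poch_of_neg _ _ hneg]
  · obtain ⟨c, hc⟩ := Int.eq_ofNat_of_zero_le hnonneg
    rw [hc]
    exact trinomial_inv_term_eq (by omega)

section Reindexing

variable {A : Type*} [AddCommMonoid A]

lemma sum_range_ite_mod_two_eq (f : ℕ → A) (M : ℕ) :
    ∑ s ∈ range (M + 1), (if s % 2 = M % 2 then f s else 0) =
      ∑ i ∈ range (M / 2 + 1), f (M - 2 * i) := by
  have h_image : (range (M + 1)).filter (fun s => s % 2 = M % 2) =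
      (range (M / 2 + 1)).image (fun i => M - 2 * i) := by
    ext s
    simp only [mem_filter, mem_range, mem_image]
    constructor
    · rintro ⟨hs, hpar⟩
      exact ⟨(M - s) / 2, by omega, by omega⟩
    · rintro ⟨i, hi, rfl⟩
      omega
  rw [← sum_filter, h_image, sum_image]
  intro i hi j hj h
  simp only [coe_range, Set.mem_Iio] at hi hj h
  omega

lemma sum_range_eq_sum_even_of_vanishing (a : ℕ → A) (ℓ n : ℕ) (h_low : ∀ r < ℓ, a r = 0)
    (h_odd : ∀ k, a (2 * k + ℓ + 1) = 0) :
    ∑ r ∈ range (n + ℓ + 1), a r = ∑ k ∈ range (n / 2 + 1), a (2 * k + ℓ) := by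
  rw [← sum_image (g := fun k => 2 * k + ℓ) (by intro i _ j _ h; simp only at h; omega)]
  refine (sum_subset ?_ fun r hr hr_image => ?_).symm
  · intro r
    simp only [mem_image, mem_range]
    omega
  · simp only [mem_image, mem_range, not_exists, not_and] at hr hr_image
    rcases lt_or_ge r ℓ with hr_low | hr_high
    · exact h_low r hr_low
    · obtain ⟨k, rfl⟩ : ∃ k, r = 2 * k + ℓ + 1 := by
        obtain ⟨k, hk⟩ := Nat.even_or_odd' (r - ℓ)
        refine ⟨k, ?_⟩
        have := hr_image k
        omega
      exact h_odd k

end Reindexing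

/-- The coefficient of `α k` in `β̃ (M + ℓ)` coming from the term `s = M - 2i` of its defining
sum. -/
def baileyKernel (ℓ M i k : ℕ) : F :=
  t ^ (((M : ℤ) - 2 * i) ^ 2) /
    (poch q q ((i : ℤ) - k) * poch q q ((i : ℤ) + k + ℓ) * poch q q ((M : ℤ) - 2 * i))

lemma baileyKernel_of_lt {ℓ M i k : ℕ} (h : i < k) : baileyKernel ℓ M i k = 0 := by
  rw [baileyKernel, poch_of_neg q q (n := (i : ℤ) - k) (by omega), zero_mul, zero_mul, div_zero]

lemma baileyKernel_of_div_two_lt {ℓ M i k : ℕ} (h : M / 2 < i) : baileyKernel ℓ M i k = 0 := by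
  rw [baileyKernel, poch_of_neg q q (n := (M : ℤ) - 2 * i) (by omega), mul_zero, div_zero]

lemma Q_zero_eq_sum_baileyKernel (ℓ M k : ℕ) :
    Q 0 (M + ℓ) (2 * k + ℓ : ℕ) = ∑ i ∈ range (M / 2 + 1), baileyKernel ℓ M i k := by
  have h_shift : ∑ i ∈ range (k + (M + ℓ + 1)), baileyKernel ℓ M i k =
      ∑ j ∈ range (M + ℓ + 1), baileyKernel ℓ M (k + j) k := by
    rw [sum_range_add, sum_eq_zero fun i hi => baileyKernel_of_lt (mem_range.1 hi), zero_add]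
  rw [← eventually_constant_sum (fun i hi => baileyKernel_of_div_two_lt hi)
    (by omega : M / 2 + 1 ≤ k + (M + ℓ + 1)), h_shift, Q_zero_eq_sum]
  refine sum_congr rfl fun j _ => ?_
  rw [baileyKernel]
  push_cast
  ring_nf

lemma poch_q_mul_poch_q_pow_succ (ℓ m : ℕ) :
    poch q q ℓ * poch q (q ^ (ℓ + 1)) m = poch q q ((ℓ + m : ℕ) : ℤ) := by
  rw [pow_succ', poch_mul_poch_mul_pow]

lemma betaTilde_eq_sum_baileyKernel (ℓ M : ℕ) (α β βt : ℕ → F)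
    (hBP : ∀ L : ℕ, β L = ∑ r ∈ range (L + 1),
      α r / (poch q q ((L : ℤ) - (r : ℤ)) * poch q (q ^ (ℓ + 1)) ((L : ℤ) + (r : ℤ))))
    (hβ : ∀ L : ℕ, βt (L + ℓ) = ∑ s ∈ range (L + 1),
      if s % 2 = L % 2 then
        t ^ (s ^ 2) / (poch q q (ℓ : ℤ) * poch q q (s : ℤ)) * β ((L - s) / 2)
      else 0) :
    βt (M + ℓ) = ∑ i ∈ range (M / 2 + 1), ∑ k ∈ range (M / 2 + 1), baileyKernel ℓ M i k * α k := by
  rw [hβ, sum_range_ite_mod_two_eq]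
  refine sum_congr rfl fun i hi => ?_
  have hi : 2 * i ≤ M := by rw [mem_range] at hi; omega
  rw [show (M - (M - 2 * i)) / 2 = i by omega, hBP, mul_sum,
    ← eventually_constant_sum (fun k hk => ?_) (by omega : i + 1 ≤ M / 2 + 1)]
  · refine sum_congr rfl fun k _ => ?_
    have h_merge :
        poch q q ((i : ℤ) + k + ℓ) = poch q q ℓ * poch q (q ^ (ℓ + 1)) ((i : ℤ) + k) := by
      rw [show (i : ℤ) + k + ℓ = (ℓ + (i + k) : ℕ) by push_cast; ring,
        ← poch_q_mul_poch_q_pow_succ, Nat.cast_add]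
    rw [baileyKernel, h_merge, ← zpow_natCast, Nat.cast_pow, Nat.cast_sub hi]
    push_cast
    ring
  · rw [poch_of_neg q q (n := (i : ℤ) - k) (by omega), zero_mul, div_zero, mul_zero]

/-- Corollary 3 of Warnaar's note, case `n = 0`: a Bailey pair relative to `a = q^ℓ`
yields a trinomial Bailey pair relative to `0`. -/
theorem binomial_gives_trinomial_BP_n_zero (ℓ : ℕ) (α β αt βt : ℕ → F)
    (hBP : ∀ L : ℕ, β L = ∑ r ∈ Finset.range (L + 1),
      α r / (poch q q ((L : ℤ) - (r : ℤ)) * poch q (q ^ (ℓ + 1)) ((L : ℤ) + (r : ℤ))))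
    (hαlow : ∀ m : ℕ, m < ℓ → αt m = 0)
    (hαeven : ∀ L : ℕ, αt (2 * L + ℓ) = α L)
    (hαodd : ∀ L : ℕ, αt (2 * L + ℓ + 1) = 0)
    (hβlow : ∀ m : ℕ, m < ℓ → βt m = 0)
    (hβ : ∀ L : ℕ, βt (L + ℓ) = ∑ s ∈ Finset.range (L + 1),
      if s % 2 = L % 2 then
        t ^ (s ^ 2) / (poch q q (ℓ : ℤ) * poch q q (s : ℤ)) * β ((L - s) / 2)
      else 0) :
    ∀ L : ℕ, βt L = ∑ r ∈ Finset.range (L + 1), Q 0 L (r : ℤ) * αt r := by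
  intro L
  rcases lt_or_ge L ℓ with hL | hL
  · rw [hβlow L hL]
    refine (sum_eq_zero fun r hr => ?_).symm
    rw [hαlow r (by rw [mem_range] at hr; omega), mul_zero]
  · obtain ⟨M, rfl⟩ := Nat.exists_eq_add_of_le' hL
    rw [betaTilde_eq_sum_baileyKernel ℓ M α β βt hBP hβ,
      sum_range_eq_sum_even_of_vanishing _ ℓ M (fun r hr => by rw [hαlow r hr, mul_zero])
        (fun k => by rw [hαodd k, mul_zero]), sum_comm]
    simp only [hαeven, Q_zero_eq_sum_baileyKernel, sum_mul]

end
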